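/- Let R be a convergent, forward-closed term rewriting system, and let l1 → r1 and l2 → r2 be rules in R such that some proper non-variable subterm of l1 is an instance of l2. Then R' = R \ {l1 → r1} is convergent, forward-closed, and generates the same congruence as R. -/

import Mathlib

/-! Basic first-order terms, positions, substitutions and rewriting. -/

inductive Term (F : Type) : Type
  | var : Nat → Term F
  | app : F → List (Term F) → Term F

namespace Term

def subst {F : Type} (σ : Nat → Term F) : Term F → Term F
  | var n => σ n
  | app f ts => app f (ts.attach.map fun ⟨t, _⟩ => t.subst σ)

def root {F : Type} : Term F → Option F
  | var _ => none
  | app f _ => some f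

def label {F : Type} : Term F → F ⊕ Nat
  | var n => Sum.inr n
  | app f _ => Sum.inl f

def IsVar {F : Type} : Term F → Prop
  | var _ => True
  | app _ _ => False

def varsL {F : Type} : Term F → List Nat
  | var n => [n]
  | app _ ts => (ts.attach.map fun ⟨t, _⟩ => t.varsL).flatten

end Term

abbrev Rule (F : Type) := Term F × Term F
abbrev TRS (F : Type) := Set (Rule F)

/-- `SubtermAt t p u` : the subterm of `t` at position `p` is `u`. -/
inductive SubtermAt {F : Type} : Term F → List Nat → Term F → Prop
  | here (t : Term F) : SubtermAt t [] t
  | there {f : F} {ts : List (Term F)} {i : Nat} {u : Term F} {p : List Nat} {v : Term F} :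
      ts[i]? = some u → SubtermAt u p v → SubtermAt (Term.app f ts) (i :: p) v

/-- `ReplaceAt t p v t'` : replacing the subterm of `t` at position `p` by `v` yields `t'`. -/
inductive ReplaceAt {F : Type} : Term F → List Nat → Term F → Term F → Prop
  | here (t u : Term F) : ReplaceAt t [] u u
  | there {f : F} {ts : List (Term F)} {i : Nat} {u : Term F} {p : List Nat} {v w : Term F} :
      ts[i]? = some u → ReplaceAt u p v w →
      ReplaceAt (Term.app f ts) (i :: p) v (Term.app f (ts.set i w))

variable {F : Type}

/-- One rewrite step using the given rule (at some position, with some substitution). -/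
def RuleStep (ρ : Rule F) (s t : Term F) : Prop :=
  ∃ (σ : Nat → Term F) (p : List Nat),
    SubtermAt s p (ρ.1.subst σ) ∧ ReplaceAt s p (ρ.2.subst σ) t

def OneStep (R : TRS F) (s t : Term F) : Prop := ∃ ρ ∈ R, RuleStep ρ s t

/-- A rewrite step at the root position. -/
def RootStep (R : TRS F) (s t : Term F) : Prop :=
  ∃ ρ ∈ R, ∃ σ : Nat → Term F, s = ρ.1.subst σ ∧ t = ρ.2.subst σ

def StarRW (R : TRS F) : Term F → Term F → Prop := Relation.ReflTransGen (OneStep R)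
def Plus (R : TRS F) : Term F → Term F → Prop := Relation.TransGen (OneStep R)
/-- Convertibility (the congruence / equational theory generated by `R`). -/
def Conv (R : TRS F) : Term F → Term F → Prop := Relation.EqvGen (OneStep R)
def Joinable (R : TRS F) (s t : Term F) : Prop := ∃ u, StarRW R s u ∧ StarRW R t u
def NormalForm (R : TRS F) (t : Term F) : Prop := ∀ u, ¬ OneStep R t u
/-- `t` is the `R`-normal form of `s`. -/
def NFof (R : TRS F) (s t : Term F) : Prop := StarRW R s t ∧ NormalForm R t
def Terminating (R : TRS F) : Prop := WellFounded (fun a b : Term F => OneStep R b a)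
def Confluent (R : TRS F) : Prop := ∀ s t u, StarRW R s t → StarRW R s u → Joinable R t u
def Convergent (R : TRS F) : Prop := Confluent R ∧ Terminating R

/-- every proper subterm is irreducible -/
def EpsIrreducible (R : TRS F) (t : Term F) : Prop :=
  ∀ p u, SubtermAt t p u → p ≠ [] → NormalForm R u

def InnermostRedex (R : TRS F) (t : Term F) : Prop :=
  EpsIrreducible R t ∧ ¬ NormalForm R t

/-- Forward-closed, via the one-step-to-normal-form characterization. -/
def FCclosed (R : TRS F) : Prop :=
  ∀ t, InnermostRedex R t → ∀ u, NFof R t u → OneStep R t u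

def Unifies (σ : Nat → Term F) (s t : Term F) : Prop := s.subst σ = t.subst σ

def IsMGU (σ : Nat → Term F) (s t : Term F) : Prop :=
  Unifies σ s t ∧ ∀ τ, Unifies τ s t → ∃ δ, ∀ x, τ x = (σ x).subst δ

def IsRenaming (ρ : Nat → Term F) : Prop :=
  ∃ f : Nat → Nat, Function.Injective f ∧ ∀ n, ρ n = Term.var (f n)

/-- Redundancy criterion for an oriented equation `e` whose right-hand side is
reachable from its left-hand side: some proper subterm of the lhs is reducible. -/
def Redundant (R : TRS F) (e : Rule F) : Prop :=
  ∃ p u, p ≠ ([] : List Nat) ∧ SubtermAt e.1 p u ∧ ¬ NormalForm R u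

/-- `R₁ ↝ R₂`: forward overlaps of rules of `R₂` (renamed apart) into
right-hand sides of rules of `R₁`, at non-variable positions, via an mgu. -/
def FStep (R₁ R₂ : TRS F) : TRS F :=
  { e | ∃ (l₁ r₁ l₂ r₂ : Term F) (ρ : Nat → Term F) (p : List Nat) (u : Term F)
          (σ : Nat → Term F) (r₁' : Term F),
      (l₁, r₁) ∈ R₁ ∧ (l₂, r₂) ∈ R₂ ∧ IsRenaming ρ ∧
      SubtermAt r₁ p u ∧ ¬ u.IsVar ∧ IsMGU σ u (l₂.subst ρ) ∧
      ReplaceAt r₁ p (r₂.subst ρ) r₁' ∧ e = (l₁.subst σ, r₁'.subst σ) }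

def FCiter (R : TRS F) : Nat → TRS F
  | 0 => R
  | k + 1 => FCiter R k ∪ { e | e ∈ FStep (FCiter R k) R ∧ ¬ Redundant (FCiter R k) e }

def FCinf (R : TRS F) : TRS F := ⋃ k, FCiter R k

/-- Forward-closed, via the forward-closure construction: `FC(R) = R`. -/
def ForwardClosedFC (R : TRS F) : Prop := FCinf R = R

/-- `RHS(R)`: `R` together with the conclusions of right-hand-side critical
pair inferences (second rule renamed apart). -/
def RHSset (R : TRS F) : TRS F :=
  R ∪ { e | ∃ (s t u₀ v₀ : Term F) (ρ σ : Nat → Term F), (s, t) ∈ R ∧ (u₀, v₀) ∈ R ∧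
        IsRenaming ρ ∧ IsMGU σ t (v₀.subst ρ) ∧
        s.subst σ ≠ (u₀.subst ρ).subst σ ∧ e = (s.subst σ, (u₀.subst ρ).subst σ) }

/-- the (unordered) pairs of root symbols of two equations coincide -/
def RootPairSimilar (e₁ e₂ : Rule F) : Prop :=
  (e₁.1.root = e₂.1.root ∧ e₁.2.root = e₂.2.root) ∨
  (e₁.1.root = e₂.2.root ∧ e₁.2.root = e₂.1.root)

def QuasiDet (E : TRS F) : Prop :=
  (∀ e ∈ E, ¬ e.1.IsVar ∧ ¬ e.2.IsVar) ∧
  (∀ e ∈ E, e.1.root ≠ e.2.root) ∧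
  (∀ e₁ ∈ E, ∀ e₂ ∈ E, e₁ ≠ e₂ → ¬ RootPairSimilar e₁ e₂)

def HasRootPairRepetition (E : TRS F) : Prop :=
  ∃ e₁ ∈ E, ∃ e₂ ∈ E, e₁ ≠ e₂ ∧ RootPairSimilar e₁ e₂

def VarPreserving (R : TRS F) : Prop :=
  ∀ e ∈ R, ∀ n, n ∈ Term.varsL e.1 ↔ n ∈ Term.varsL e.2

def RightReduced (R : TRS F) : Prop := ∀ e ∈ R, NormalForm R e.2

def AlmostLeftReduced (R : TRS F) : Prop :=
  ¬ ∃ (l₁ r₁ l₂ r₂ : Term F) (p : List Nat) (u : Term F) (σ : Nat → Term F),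
      (l₁, r₁) ∈ R ∧ (l₂, r₂) ∈ R ∧ p ≠ [] ∧ SubtermAt l₁ p u ∧ u = l₂.subst σ

def NonSubtermCollapsing (R : TRS F) : Prop :=
  ¬ ∃ (t u : Term F) (p : List Nat), p ≠ [] ∧ SubtermAt u p t ∧ Conv R t u

structure LMSystem (R : TRS F) : Prop where
  convergent : Convergent R
  almostLeftReduced : AlmostLeftReduced R
  rightReduced : RightReduced R
  nonCollapsing : NonSubtermCollapsing R
  forwardClosed : FCclosed R
  quasiDet : QuasiDet (RHSset R)

/-- the symbol (function symbol or variable) of a term at a position, if defined -/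
def labelAt {F : Type} : List Nat → Term F → Option (F ⊕ Nat)
  | [], t => some t.label
  | i :: p, Term.app _ ts => (ts[i]?).bind (labelAt p)
  | _ :: _, Term.var _ => none

/-- outermost distinguishing position -/
def ODP (s t : Term F) (p : List Nat) : Prop :=
  (labelAt p s ≠ none ∨ labelAt p t ≠ none) ∧
  labelAt p s ≠ labelAt p t ∧
  ∀ q, q <+: p → q ≠ p → labelAt q s = labelAt q t

/-!
If some proper subterm of `l₁` is an instance of the left-hand side of another rule, then
every instance of `l₁` is already reducible strictly below the root by `R' = R \ {l₁ → r₁}`.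
Hence `R` and `R'` have the same normal forms, so the `R'`-normal form of a term is its
`R`-normal form: convergence and the congruence carry over to `R'`. An innermost
`R'`-redex is an innermost `R`-redex, which by forward-closure of `R` reaches its normal form
in one `R`-step; that step cannot use `l₁ → r₁`, because it would expose an `R'`-redex
strictly below the root.
-/

namespace Term

theorem subst_app (σ : Nat → Term F) (f : F) (ts : List (Term F)) :
    (app f ts).subst σ = app f (ts.map (·.subst σ)) := by
  simp [subst]

theorem subst_subst (σ τ : Nat → Term F) :
    ∀ t : Term F, (t.subst σ).subst τ = t.subst (fun n => (σ n).subst τ)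
  | var n => by simp [subst]
  | app f ts => by
    simp only [subst_app, List.map_map]
    congr 1
    refine List.map_congr_left fun t ht => ?_
    exact subst_subst σ τ t
termination_by t => sizeOf t
decreasing_by
  have := List.sizeOf_lt_of_mem ht
  simp [app.sizeOf_spec]
  omega

end Term

namespace SubtermAt

theorem subst {σ : Nat → Term F} {t u : Term F} {p : List Nat} (h : SubtermAt t p u) :
    SubtermAt (t.subst σ) p (u.subst σ) := by
  induction h with
  | here t => exact .here _
  | there hget _ ih =>
    rw [Term.subst_app]
    exact .there (by rw [List.getElem?_map, hget]; rfl) ih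

theorem trans {t u v : Term F} {p q : List Nat} (htu : SubtermAt t p u)
    (huv : SubtermAt u q v) : SubtermAt t (p ++ q) v := by
  induction htu with
  | here => exact huv
  | there hget _ ih => exact .there hget (ih huv)

theorem exists_replaceAt {t u : Term F} {p : List Nat} (h : SubtermAt t p u) (v : Term F) :
    ∃ t', ReplaceAt t p v t' := by
  induction h with
  | here => exact ⟨v, .here _ v⟩
  | there hget _ ih =>
    obtain ⟨w, hw⟩ := ih
    exact ⟨_, .there hget hw⟩

end SubtermAt

theorem not_normalForm_of_subtermAt_subst {R : TRS F} {ρ : Rule F} (hρ : ρ ∈ R)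
    {t : Term F} {q : List Nat} {σ : Nat → Term F} (h : SubtermAt t q (ρ.1.subst σ)) :
    ¬ NormalForm R t := fun hnf =>
  have ⟨t', ht'⟩ := h.exists_replaceAt (ρ.2.subst σ)
  hnf t' ⟨ρ, hρ, σ, q, h, ht'⟩

theorem not_normalForm_of_subtermAt {R : TRS F} {t v : Term F} {q : List Nat}
    (h : SubtermAt t q v) (hv : ¬ NormalForm R v) : ¬ NormalForm R t := by
  simp only [NormalForm, not_forall, not_not] at hv
  obtain ⟨_, ρ, hρ, σ, q', hq', _⟩ := hv
  exact not_normalForm_of_subtermAt_subst hρ (h.trans hq')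

theorem OneStep.mono {R S : TRS F} (h : R ⊆ S) {a b : Term F} (hab : OneStep R a b) :
    OneStep S a b :=
  let ⟨ρ, hρ, hstep⟩ := hab
  ⟨ρ, h hρ, hstep⟩

theorem StarRW.mono {R S : TRS F} (h : R ⊆ S) {a b : Term F} (hab : StarRW R a b) :
    StarRW S a b :=
  Relation.ReflTransGen.mono (fun _ _ => OneStep.mono h) _ _ hab

theorem Terminating.mono {R S : TRS F} (h : R ⊆ S) (hS : Terminating S) : Terminating R :=
  Subrelation.wf (OneStep.mono h) hS

theorem Terminating.exists_nfOf {R : TRS F} (hR : Terminating R) (t : Term F) :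
    ∃ u, NFof R t u := by
  induction t using hR.induction with
  | _ t ih =>
    by_cases h : NormalForm R t
    · exact ⟨t, .refl, h⟩
    · simp only [NormalForm, not_forall, not_not] at h
      obtain ⟨t', ht'⟩ := h
      obtain ⟨u, hu, hnf⟩ := ih t' ht'
      exact ⟨u, .head ht' hu, hnf⟩

theorem NormalForm.eq_of_starRW {R : TRS F} {t u : Term F} (hnf : NormalForm R t)
    (h : StarRW R t u) : t = u := by
  rcases h.cases_head with rfl | ⟨c, hc, _⟩
  · rfl
  · exact absurd hc (hnf c)

theorem Confluent.nfOf_unique {R : TRS F} (hR : Confluent R) {s t u : Term F}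
    (ht : NFof R s t) (hu : NFof R s u) : t = u := by
  obtain ⟨v, htv, huv⟩ := hR s t u ht.1 hu.1
  rw [ht.2.eq_of_starRW htv, hu.2.eq_of_starRW huv]

section SameNormalForms

variable {R R' : TRS F} (hR'R : R' ⊆ R) (hNF : ∀ t, NormalForm R' t → NormalForm R t)
include hR'R hNF

theorem NFof.of_subset {a b w : Term F} (hab : StarRW R' a b) (hbw : NFof R' b w) :
    NFof R a w :=
  ⟨StarRW.mono hR'R (hab.trans hbw.1), hNF w hbw.2⟩

theorem confluent_of_subset (hR : Confluent R) (hR' : Terminating R') : Confluent R' := by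
  intro a b c hab hac
  obtain ⟨w, hw⟩ := hR'.exists_nfOf b
  obtain ⟨w', hw'⟩ := hR'.exists_nfOf c
  have hww' : w = w' :=
    hR.nfOf_unique (NFof.of_subset hR'R hNF hab hw) (NFof.of_subset hR'R hNF hac hw')
  exact ⟨w, hw.1, hww' ▸ hw'.1⟩

theorem conv_of_subset (hR : Confluent R) (hR' : Terminating R') {a b : Term F}
    (hab : Conv R a b) : Conv R' a b := by
  suffices hstep : ∀ a b, OneStep R a b → Conv R' a b from
    (Relation.EqvGen.is_equivalence _).eqvGen_iff.mp (Relation.EqvGen.mono hstep a b hab)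
  intro a b hab
  obtain ⟨w, hw⟩ := hR'.exists_nfOf a
  obtain ⟨w', hw'⟩ := hR'.exists_nfOf b
  have hww' : w = w' :=
    hR.nfOf_unique (NFof.of_subset hR'R hNF .refl hw)
      ⟨.head hab (NFof.of_subset hR'R hNF .refl hw').1, hNF w' hw'.2⟩
  subst hww'
  exact .trans _ _ _ (Relation.EqvGen.reflTransGen_le_eqvGen _ _ _ hw.1)
    (.symm _ _ (Relation.EqvGen.reflTransGen_le_eqvGen _ _ _ hw'.1))

end SameNormalForms

section RedundantRules

variable {R R' : TRS F}
  (hred : ∀ ρ ∈ R, ρ ∉ R' → ∀ σ, Redundant R' (ρ.1.subst σ, ρ.2.subst σ))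
include hred

theorem normalForm_of_redundant (t : Term F) (ht : NormalForm R' t) : NormalForm R t := by
  rintro t' ⟨ρ, hρ, σ, q, hq, hrepl⟩
  by_cases hρ' : ρ ∈ R'
  · exact ht t' ⟨ρ, hρ', σ, q, hq, hrepl⟩
  · obtain ⟨q', v, -, hv, hvred⟩ := hred ρ hρ hρ' σ
    exact not_normalForm_of_subtermAt (hq.trans hv) hvred ht

theorem FCclosed.of_redundant (hR'R : R' ⊆ R) (hR : FCclosed R) : FCclosed R' := by
  rintro t ⟨hproper, hreducible⟩ w ⟨htw, hw⟩
  have hnf := normalForm_of_redundant hred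
  have hinnerR : InnermostRedex R t :=
    ⟨fun q v hv hq => hnf v (hproper q v hv hq),
      fun h => hreducible fun v hv => h v (hv.mono hR'R)⟩
  obtain ⟨ρ, hρ, σ, q, hq, hrepl⟩ := hR t hinnerR w ⟨StarRW.mono hR'R htw, hnf w hw⟩
  by_cases hρ' : ρ ∈ R'
  · exact ⟨ρ, hρ', σ, q, hq, hrepl⟩
  · obtain ⟨q', v, hq', hv, hvred⟩ := hred ρ hρ hρ' σ
    exact absurd (hproper _ v (hq.trans hv) (by simp [hq'])) hvred

end RedundantRules

theorem Redundant.subst_of_subtermAt_subst {R : TRS F} {l₁ r₁ l₂ r₂ : Term F}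
    (h₂ : (l₂, r₂) ∈ R) {p : List Nat} (hp : p ≠ []) {s : Nat → Term F}
    (h : SubtermAt l₁ p (l₂.subst s)) (σ : Nat → Term F) :
    Redundant R (l₁.subst σ, r₁.subst σ) := by
  refine ⟨p, _, hp, h.subst, ?_⟩
  rw [Term.subst_subst]
  exact not_normalForm_of_subtermAt_subst h₂ (.here _)

theorem delete_rule_preserves_general {F : Type} (R : TRS F)
    (hconv : Convergent R) (hfc : FCclosed R)
    (l1 r1 l2 r2 : Term F) (h2 : (l2, r2) ∈ R)
    (hne : (l1, r1) ≠ (l2, r2))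
    (p : List Nat) (u : Term F) (s : Nat → Term F)
    (hp : p ≠ []) (hsub : SubtermAt l1 p u)
    (hinst : u = l2.subst s) :
    Convergent (R \ {(l1, r1)}) ∧ FCclosed (R \ {(l1, r1)}) ∧
      (∀ a b, Conv (R \ {(l1, r1)}) a b ↔ Conv R a b) := by
  have hR'R : R \ {(l1, r1)} ⊆ R := Set.sdiff_subset
  have h2' : (l2, r2) ∈ R \ {(l1, r1)} := ⟨h2, fun h => hne (Set.mem_singleton_iff.mp h).symm⟩
  have hred : ∀ ρ ∈ R, ρ ∉ R \ {(l1, r1)} → ∀ σ,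
      Redundant (R \ {(l1, r1)}) (ρ.1.subst σ, ρ.2.subst σ) := by
    intro ρ hρ hρ'
    obtain rfl : ρ = (l1, r1) := by simpa [hρ] using hρ'
    exact Redundant.subst_of_subtermAt_subst h2' hp (hinst ▸ hsub)
  have hNF := normalForm_of_redundant hred
  have hterm : Terminating (R \ {(l1, r1)}) := hconv.2.mono hR'R
  exact ⟨⟨confluent_of_subset hR'R hNF hconv.1 hterm, hterm⟩,
    FCclosed.of_redundant hred hR'R hfc,
    fun a b => ⟨Relation.EqvGen.mono (fun _ _ => OneStep.mono hR'R) a b,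
      conv_of_subset hR'R hNF hconv.1 hterm⟩⟩

/-- deleting a rule whose lhs has a proper non-variable subterm that is an
instance of the lhs of another rule preserves convergence, forward-closure and the
congruence. -/
theorem delete_rule_preserves {F : Type} (R : TRS F)
    (hconv : Convergent R) (hfc : FCclosed R)
    (l1 r1 l2 r2 : Term F) (h1 : (l1, r1) ∈ R) (h2 : (l2, r2) ∈ R)
    (hne : (l1, r1) ≠ (l2, r2))
    (p : List Nat) (u : Term F) (s : Nat → Term F)
    (hp : p ≠ []) (hsub : SubtermAt l1 p u) (hnv : ¬ u.IsVar)
    (hinst : u = l2.subst s) :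
    Convergent (R \ {(l1, r1)}) ∧ FCclosed (R \ {(l1, r1)}) ∧
      (∀ a b, Conv (R \ {(l1, r1)}) a b ↔ Conv R a b) :=
  delete_rule_preserves_general R hconv hfc l1 r1 l2 r2 h2 hne p u s hp hsub hinst
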